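/- Monotone subblock penalty bound: if O_t(s) is a minimal-penalty t-error-building block for s and X is any nonempty sub-multiset of O_t(s) of size t', with v_X = ⊕_{j∈X} h_j, then X is a minimal-penalty t'-error-building block for v_X, i.e., m_{t'}(v_X) = M(X). -/

import Mathlib

open scoped ENNReal

/-- Mod-2 sum of the columns of `h` indexed by the multiset `S` (with multiplicity). -/
def colSum {N Q : ℕ} (h : Fin N → Fin Q → ZMod 2) (S : Multiset (Fin N)) :
    Fin Q → ZMod 2 :=
  (S.map h).sum

/-- Block penalty: sum of the nonnegative reliabilities over `S` (with multiplicity). -/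
def penalty {N : ℕ} (w : Fin N → NNReal) (S : Multiset (Fin N)) : NNReal :=
  (S.map w).sum

/-- Minimal penalty of a `t`-error-building block for `v` (`⊤` if none exists). -/
noncomputable def mPen {N Q : ℕ} (h : Fin N → Fin Q → ZMod 2) (w : Fin N → NNReal)
    (t : ℕ) (v : Fin Q → ZMod 2) : ℝ≥0∞ :=
  sInf ((fun S => ((penalty w S : NNReal) : ℝ≥0∞)) ''
    {S : Multiset (Fin N) | Multiset.card S = t ∧ colSum h S = v})

/-!
Exchange argument: if a sub-block `X` of an optimal block `O` could be replaced by a cheaper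
block `S` of the same size and column sum, then `(O - X) + S` would be a block of the same size
and column sum as `O` with smaller penalty.
-/

section Blocks

variable {N Q : ℕ} (h : Fin N → Fin Q → ZMod 2) (w : Fin N → NNReal)

theorem colSum_add (A B : Multiset (Fin N)) : colSum h (A + B) = colSum h A + colSum h B := by
  simp only [colSum, Multiset.map_add, Multiset.sum_add]

theorem penalty_add (A B : Multiset (Fin N)) : penalty w (A + B) = penalty w A + penalty w B := by
  simp only [penalty, Multiset.map_add, Multiset.sum_add]

theorem mPen_le_penalty {t : ℕ} {v : Fin Q → ZMod 2} {S : Multiset (Fin N)}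
    (hcard : Multiset.card S = t) (hsum : colSum h S = v) :
    mPen h w t v ≤ penalty w S :=
  sInf_le ⟨S, ⟨hcard, hsum⟩, rfl⟩

theorem le_mPen {t : ℕ} {v : Fin Q → ZMod 2} {p : ℝ≥0∞}
    (hp : ∀ S : Multiset (Fin N), Multiset.card S = t → colSum h S = v → p ≤ penalty w S) :
    p ≤ mPen h w t v :=
  le_sInf <| by
    rintro _ ⟨S, ⟨hcard, hsum⟩, rfl⟩
    exact hp S hcard hsum

theorem penalty_le_of_le_of_optimal {O X S : Multiset (Fin N)}
    (hO : (penalty w O : ℝ≥0∞) = mPen h w (Multiset.card O) (colSum h O)) (hX : X ≤ O)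
    (hcard : Multiset.card S = Multiset.card X) (hsum : colSum h S = colSum h X) :
    penalty w X ≤ penalty w S := by
  have hOX : O - X + X = O := tsub_add_cancel_of_le hX
  have hswap_card : Multiset.card (O - X + S) = Multiset.card O := by
    rw [← hOX, Multiset.card_add, Multiset.card_add, hcard, tsub_add_cancel_of_le hX]
  have hswap_sum : colSum h (O - X + S) = colSum h O := by
    rw [colSum_add, hsum, ← colSum_add, hOX]
  have hle : penalty w O ≤ penalty w (O - X + S) := by
    exact_mod_cast hO ▸ mPen_le_penalty h w hswap_card hswap_sum
  rw [← hOX, penalty_add, penalty_add, tsub_add_cancel_of_le hX] at hle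
  exact le_of_add_le_add_left hle

theorem mPen_card_colSum_of_le_of_optimal {O X : Multiset (Fin N)}
    (hO : (penalty w O : ℝ≥0∞) = mPen h w (Multiset.card O) (colSum h O)) (hX : X ≤ O) :
    mPen h w (Multiset.card X) (colSum h X) = penalty w X :=
  le_antisymm (mPen_le_penalty h w rfl rfl) <| le_mPen h w fun _ hcard hsum =>
    ENNReal.coe_le_coe.mpr (penalty_le_of_le_of_optimal h w hO hX hcard hsum)

end Blocks

theorem stmt15_general {N Q : ℕ} (h : Fin N → Fin Q → ZMod 2) (w : Fin N → NNReal)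
    (s : Fin Q → ZMod 2) (t t' : ℕ) (O X : Multiset (Fin N))
    (hOcard : Multiset.card O = t) (hOsum : colSum h O = s)
    (hOopt : ((penalty w O : NNReal) : ℝ≥0∞) = mPen h w t s)
    (hX : X ≤ O) (hXcard : Multiset.card X = t') :
    mPen h w t' (colSum h X) = ((penalty w X : NNReal) : ℝ≥0∞) := by
  subst hOcard hOsum hXcard
  exact mPen_card_colSum_of_le_of_optimal h w hOopt hX

/-- any nonempty sub-multiset `X` of size `t'` of a minimal-penalty
`t`-error-building block for `s` is itself a minimal-penalty `t'`-error-building block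
for the vector `v_X` it sums to: `m_{t'}(v_X) = M(X)`. -/
theorem stmt15 {N Q : ℕ} (h : Fin N → Fin Q → ZMod 2) (w : Fin N → NNReal)
    (s : Fin Q → ZMod 2) (t t' : ℕ) (O X : Multiset (Fin N))
    (hOcard : Multiset.card O = t) (hOsum : colSum h O = s)
    (hOopt : ((penalty w O : NNReal) : ℝ≥0∞) = mPen h w t s)
    (hX : X ≤ O) (hXne : X ≠ 0) (hXcard : Multiset.card X = t') :
    mPen h w t' (colSum h X) = ((penalty w X : NNReal) : ℝ≥0∞) :=
  stmt15_general h w s t t' O X hOcard hOsum hOopt hX hXcard
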